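/- Let Ψ be a real symmetric n×n matrix indexed by a quasi-uniform set D_n ⊂ ℝ^d, with N = ⌊n^{1/d}⌋, and suppose |Ψ_{s,t}| ≤ C (1 + N‖s−t‖₂)^{−(d+ζ)} · (1 + [ζ = 0]·log(1 + N‖s−t‖₂)) for all s,t ∈ D_n, where C > 0 is bounded and ζ ≥ 0. Then there exists a bounded constant A > 0 (depending only on C, d, ζ and the quasi-uniformity constants) such that ‖Ψ‖_F ≤ A √n. (Lemma C.3: Frobenius-norm bound for symmetric matrices with log-augmented polynomially decaying off-diagonals.) -/

import Mathlib

open MeasureTheory ProbabilityTheory Filter Matrix BoundedContinuousFunction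
open scoped BigOperators ENNReal NNReal Topology Classical

noncomputable section

/-- Points of `ℝ^d` with the Euclidean structure. -/
abbrev Pt (d : ℕ) := EuclideanSpace ℝ (Fin d)

/-- `N = ⌊n^(1/d)⌋`. -/
def Nof (d n : ℕ) : ℕ := Nat.floor ((n : ℝ) ^ ((1 : ℝ) / (d : ℝ)))

/-- Quasi-uniformity of the `n`-point sampling set `D ⊂ ℝ^d`: for every `s ∈ D` there is an
enumeration of `D \ {s}` which is monotone in the distance to `s` (so that its `i`-th element is
the `i`-th nearest neighbour of `s`), whose distances obey the two-sided bound
`Cmin (i/n)^{1/d} ≤ r_{s,i} ≤ Cmax (i/n)^{1/d}`. -/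
def QuasiUniform (d n : ℕ) (Cmin Cmax : ℝ) (D : Finset (Pt d)) : Prop :=
  D.card = n ∧
  ∀ s ∈ D, ∃ g : Fin (n - 1) → Pt d,
    (∀ i, g i ∈ D.erase s) ∧ Function.Injective g ∧
    (∀ t ∈ D.erase s, ∃ i, g i = t) ∧
    (∀ i j : Fin (n - 1), i ≤ j → dist s (g i) ≤ dist s (g j)) ∧
    (∀ i : Fin (n - 1),
      Cmin * (((i : ℕ) + 1 : ℝ) / (n : ℝ)) ^ ((1 : ℝ) / (d : ℝ)) ≤ dist s (g i) ∧
      dist s (g i) ≤ Cmax * (((i : ℕ) + 1 : ℝ) / (n : ℝ)) ^ ((1 : ℝ) / (d : ℝ)))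

/-- Preconditioning neighbourhoods `nb` and coefficients `a` of order `m` for the set `D`:
each `N_m(s) = nb s` lies in `D` within distance `c₀/N` of `s`; the coefficients annihilate all
monomials `(t-s)^r` with `|r|₁ < m`, do not annihilate some monomial with `|r|₁ ≥ m`, and are
normalized in Euclidean norm. -/
def PrecondCoeffs (d m : ℕ) (c₀ : ℝ) (N : ℕ) (D : Finset (Pt d))
    (nb : Pt d → Finset (Pt d)) (a : Pt d → Pt d → ℝ) : Prop :=
  ∀ s ∈ D,
    nb s ⊆ D ∧
    (∀ t ∈ nb s, ‖t - s‖ ≤ c₀ / (N : ℝ)) ∧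
    (∀ r : Fin d → ℕ, (∑ j, r j) < m →
      (∑ t ∈ nb s, a s t * ∏ j, (t j - s j) ^ r j) = 0) ∧
    (∃ r : Fin d → ℕ, m ≤ (∑ j, r j) ∧
      (∑ t ∈ nb s, a s t * ∏ j, (t j - s j) ^ r j) ≠ 0) ∧
    (∑ t ∈ nb s, (a s t) ^ 2) = 1

/-- The Fourier filter `f^N_s(ω)` of the preconditioning coefficients. -/
def fN (d : ℕ) (ν : ℝ) (N : ℕ) (nb : Pt d → Finset (Pt d))
    (a : Pt d → Pt d → ℝ) (s ω : Pt d) : ℂ :=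
  ((‖ω‖ ^ (-(ν + (d : ℝ) / 2)) : ℝ) : ℂ) *
    ∑ t ∈ nb s, ((a s t : ℝ) : ℂ) *
      Complex.exp (Complex.I * ((inner ℝ ((N : ℝ) • ω) (t - s) : ℝ) : ℂ))

/-- `h_N(x) = (1 + (Nx)^{-2})^{-(ν + d/2)}`. -/
def hN (d : ℕ) (ν : ℝ) (N : ℕ) (x : ℝ) : ℝ :=
  (1 + ((N : ℝ) * x) ^ (-(2 : ℝ))) ^ (-(ν + (d : ℝ) / 2))

/-- The matrix `K_{n,m}(ρ)`, the `φ₀`-normalized covariance matrix of the preconditioned data,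
given through its spectral representation. -/
def Kmat {d : ℕ} (ν : ℝ) (N : ℕ) (D : Finset (Pt d))
    (nb : Pt d → Finset (Pt d)) (a : Pt d → Pt d → ℝ) (ρ : ℝ) :
    Matrix D D ℝ :=
  Matrix.of fun s t =>
    ρ ^ (-(2 * ν)) *
      (∫ (ω : Pt d),
        Complex.exp (Complex.I * ((inner ℝ ((t : Pt d) - (s : Pt d)) ω : ℝ) : ℂ)) *
          fN d ν N nb a (s : Pt d) ω * (starRingEnd ℂ) (fN d ν N nb a (t : Pt d) ω) *
          ((hN d ν N (ρ * ‖ω‖) : ℝ) : ℂ)).re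

/-- Block-diagonal restriction of a matrix along the partition determined by a labelling `bin`. -/
def bdiag {d : ℕ} {D : Finset (Pt d)} (bin : Pt d → ℕ) (A : Matrix D D ℝ) :
    Matrix D D ℝ :=
  Matrix.of fun s t => if bin (s : Pt d) = bin (t : Pt d) then A s t else 0

/-- `L_{n,m}(ρ) = ρ^{2ν} K_{n,m}(ρ)`. -/
def Lmat {d : ℕ} (ν : ℝ) (N : ℕ) (D : Finset (Pt d))
    (nb : Pt d → Finset (Pt d)) (a : Pt d → Pt d → ℝ) (ρ : ℝ) :
    Matrix D D ℝ :=
  ρ ^ (2 * ν) • Kmat ν N D nb a ρ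

/-- `K^B_{n,m}(ρ)`: the block-diagonal approximation of `K_{n,m}(ρ)`. -/
def KmatB {d : ℕ} (ν : ℝ) (N : ℕ) (D : Finset (Pt d))
    (nb : Pt d → Finset (Pt d)) (a : Pt d → Pt d → ℝ) (bin : Pt d → ℕ) (ρ : ℝ) :
    Matrix D D ℝ := bdiag bin (Kmat ν N D nb a ρ)

/-- `L^B_{n,m}(ρ) = ρ^{2ν} K^B_{n,m}(ρ)`. -/
def LmatB {d : ℕ} (ν : ℝ) (N : ℕ) (D : Finset (Pt d))
    (nb : Pt d → Finset (Pt d)) (a : Pt d → Pt d → ℝ) (bin : Pt d → ℕ) (ρ : ℝ) :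
    Matrix D D ℝ := bdiag bin (Lmat ν N D nb a ρ)

/-- Euclidean norm of a finite-dimensional real vector. -/
def eNorm {ι : Type*} [Fintype ι] (v : ι → ℝ) : ℝ := Real.sqrt (∑ i, (v i) ^ 2)

/-- Frobenius norm of a real matrix. -/
def frobNorm {ι : Type*} [Fintype ι] (A : Matrix ι ι ℝ) : ℝ :=
  Real.sqrt (∑ i, ∑ j, (A i j) ^ 2)

/-- The `ℓ² → ℓ²` operator (spectral) norm of a real matrix. -/
def opNorm {ι : Type*} [Fintype ι] (A : Matrix ι ι ℝ) : ℝ :=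
  sSup {c : ℝ | ∃ v : ι → ℝ, eNorm v ≤ 1 ∧ c = eNorm (A.mulVec v)}

/-- The positive semidefinite square root of a positive semidefinite matrix, as
`Matrix.PosSemidef.sqrt` was defined in the older Mathlib (removed since). -/
def psdSqrt {ι : Type*} [Fintype ι] [DecidableEq ι] {A : Matrix ι ι ℝ} (hA : A.PosSemidef) :
    Matrix ι ι ℝ :=
  hA.1.eigenvectorUnitary.1 * diagonal ((↑) ∘ (√·) ∘ hA.1.eigenvalues) *
    (star hA.1.eigenvectorUnitary : Matrix ι ι ℝ)

/-- The nuclear norm (sum of singular values): trace of the psd square root of `Aᵀ A`. -/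
def nucNorm {ι : Type*} [Fintype ι] [DecidableEq ι] (A : Matrix ι ι ℝ) : ℝ :=
  (psdSqrt (Matrix.posSemidef_conjTranspose_mul_self A)).trace

/-- The standard Gaussian product measure on `ι → ℝ`. -/
def stdGaussianPi (ι : Type*) [Fintype ι] : Measure (ι → ℝ) :=
  Measure.pi fun _ => gaussianReal 0 1

end

/-! The log factor costs at most `(1 + y)^{1/4}`, so the squared entries decay like
`(1 + N‖s - t‖)^{-p}` with `p = 2(d + ζ) - 1/2 > d`. By quasi-uniformity the `i`-th nearest
neighbour of `s` satisfies `N‖s - t‖ ≳ i^{1/d}`, so every row sum of squares is bounded by a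
convergent series `∑ i^{-p/d}`; summing the `n` rows gives `‖Ψ‖_F² = O(n)`. -/

lemma one_add_log_le_five_mul_rpow {x : ℝ} (hx : 1 ≤ x) :
    1 + Real.log x ≤ 5 * x ^ (4⁻¹ : ℝ) := by
  have hlog : Real.log x ≤ x ^ (4⁻¹ : ℝ) / 4⁻¹ :=
    Real.log_le_rpow_div (by linarith) (by norm_num)
  have hone : 1 ≤ x ^ (4⁻¹ : ℝ) := Real.one_le_rpow hx (by norm_num)
  rw [div_inv_eq_mul] at hlog
  linarith

lemma sq_le_of_abs_le_rpow_neg_mul_one_add_log {a C α y : ℝ} (P : Prop) [Decidable P]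
    (hy : 0 ≤ y)
    (ha : |a| ≤ C * (1 + y) ^ (-α) * (1 + if P then Real.log (1 + y) else 0)) :
    a ^ 2 ≤ 25 * C ^ 2 * (1 + y) ^ (-(2 * α - 2⁻¹)) := by
  have hx : 1 ≤ 1 + y := by linarith
  have hlog : 0 ≤ Real.log (1 + y) := Real.log_nonneg hx
  have hfactor : 0 ≤ (1 + if P then Real.log (1 + y) else 0) ∧
      (1 + if P then Real.log (1 + y) else 0) ≤ 5 * (1 + y) ^ (4⁻¹ : ℝ) := by
    have := one_add_log_le_five_mul_rpow hx
    have := Real.one_le_rpow hx (by norm_num : (0 : ℝ) ≤ 4⁻¹)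
    split_ifs <;> constructor <;> linarith
  have hx0 : 0 < 1 + y := by linarith
  calc a ^ 2 = |a| ^ 2 := (sq_abs a).symm
    _ ≤ (C * (1 + y) ^ (-α) * (1 + if P then Real.log (1 + y) else 0)) ^ 2 :=
      pow_le_pow_left₀ (abs_nonneg a) ha 2
    _ = C ^ 2 * ((1 + y) ^ (-α)) ^ 2 * (1 + if P then Real.log (1 + y) else 0) ^ 2 := by ring
    _ ≤ C ^ 2 * ((1 + y) ^ (-α)) ^ 2 * (5 * (1 + y) ^ (4⁻¹ : ℝ)) ^ 2 :=
      mul_le_mul_of_nonneg_left (pow_le_pow_left₀ hfactor.1 hfactor.2 2) (by positivity)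
    _ = 25 * C ^ 2 * ((1 + y) ^ (-α) * (1 + y) ^ (4⁻¹ : ℝ)) ^ 2 := by ring
    _ = 25 * C ^ 2 * (1 + y) ^ (-(2 * α - 2⁻¹)) := by
      rw [← Real.rpow_add hx0, ← Real.rpow_mul_natCast hx0.le]
      ring_nf

lemma div_two_mul_rpow_le_Nof_mul {d n : ℕ} {c k r : ℝ} (hn : 1 ≤ n) (hc : 0 ≤ c)
    (hk : 0 ≤ k) (hr : c * (k / n) ^ ((1 : ℝ) / d) ≤ r) :
    c / 2 * k ^ ((1 : ℝ) / d) ≤ Nof d n * r := by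
  have hn' : (1 : ℝ) ≤ n := by exact_mod_cast hn
  have hroot : 1 ≤ (n : ℝ) ^ ((1 : ℝ) / d) := Real.one_le_rpow hn' (by positivity)
  have hN : (n : ℝ) ^ ((1 : ℝ) / d) / 2 ≤ Nof d n := (Nat.div_two_lt_floor hroot).le
  rw [Real.div_rpow hk (by positivity)] at hr
  calc c / 2 * k ^ ((1 : ℝ) / d)
      = (n : ℝ) ^ ((1 : ℝ) / d) / 2 * (c * (k ^ ((1 : ℝ) / d) / (n : ℝ) ^ ((1 : ℝ) / d))) := by
        field_simp
    _ ≤ Nof d n * r := mul_le_mul hN hr (by positivity) (Nat.cast_nonneg _)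

lemma QuasiUniform.sum_one_add_Nof_mul_norm_rpow_neg_le {d n : ℕ} {Cmin Cmax p : ℝ}
    {D : Finset (Pt d)} (hD : QuasiUniform d n Cmin Cmax D) (hCmin : 0 < Cmin)
    (hd : 0 < d) (hdp : (d : ℝ) < p) {s : Pt d} (hs : s ∈ D) :
    ∑ t ∈ D, (1 + Nof d n * ‖s - t‖) ^ (-p) ≤
      1 + (Cmin / 2) ^ (-p) * ∑' k : ℕ, ((k : ℝ) + 1) ^ (-(p / d)) := by
  obtain ⟨hcard, hnbr⟩ := hD
  obtain ⟨g, hg_mem, hg_inj, hg_surj, -, hg_dist⟩ := hnbr s hs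
  have hn : 1 ≤ n := hcard ▸ Finset.card_pos.2 ⟨s, hs⟩
  have hp : 0 ≤ p := (Nat.cast_nonneg d).trans hdp.le
  have hsummable : Summable fun k : ℕ => ((k : ℝ) + 1) ^ (-(p / d)) := by
    have hq : 1 < p / d := (one_lt_div (by positivity)).2 hdp
    simpa using (summable_nat_add_iff 1).2 (Real.summable_nat_rpow.2 (neg_lt_neg hq))
  have hterm (i : Fin (n - 1)) :
      (1 + Nof d n * ‖s - g i‖) ^ (-p) ≤ (Cmin / 2) ^ (-p) * ((i : ℝ) + 1) ^ (-(p / d)) := by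
    have hlow : Cmin / 2 * ((i : ℝ) + 1) ^ ((1 : ℝ) / d) ≤ Nof d n * ‖s - g i‖ := by
      rw [← dist_eq_norm]
      exact div_two_mul_rpow_le_Nof_mul hn hCmin.le (by positivity) (hg_dist i).1
    calc (1 + Nof d n * ‖s - g i‖) ^ (-p)
        ≤ (Cmin / 2 * ((i : ℝ) + 1) ^ ((1 : ℝ) / d)) ^ (-p) :=
          Real.rpow_le_rpow_of_nonpos (by positivity) (by linarith) (by linarith)
      _ = (Cmin / 2) ^ (-p) * ((i : ℝ) + 1) ^ (-(p / d)) := by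
          rw [Real.mul_rpow (by positivity) (by positivity), ← Real.rpow_mul (by positivity)]
          ring_nf
  have hsplit : ∑ t ∈ D, (1 + Nof d n * ‖s - t‖) ^ (-p) =
      1 + ∑ i : Fin (n - 1), (1 + Nof d n * ‖s - g i‖) ^ (-p) := by
    rw [← Finset.add_sum_erase D _ hs, sub_self, norm_zero, mul_zero, add_zero, Real.one_rpow]
    congr 1
    refine (Finset.sum_nbij g (fun i _ => hg_mem i) hg_inj.injOn (fun t ht => ?_)
      (fun _ _ => rfl)).symm
    obtain ⟨i, rfl⟩ := hg_surj t ht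
    exact ⟨i, Finset.mem_coe.2 (Finset.mem_univ i), rfl⟩
  have hpartial : ∑ i : Fin (n - 1), ((i : ℝ) + 1) ^ (-(p / d)) ≤
      ∑' k : ℕ, ((k : ℝ) + 1) ^ (-(p / d)) := by
    rw [Fin.sum_univ_eq_sum_range (fun k => ((k : ℝ) + 1) ^ (-(p / d)))]
    exact hsummable.sum_le_tsum _ (fun k _ => by positivity)
  rw [hsplit, add_le_add_iff_left]
  calc ∑ i : Fin (n - 1), (1 + Nof d n * ‖s - g i‖) ^ (-p)
      ≤ ∑ i : Fin (n - 1), (Cmin / 2) ^ (-p) * ((i : ℝ) + 1) ^ (-(p / d)) :=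
        Finset.sum_le_sum fun i _ => hterm i
    _ ≤ (Cmin / 2) ^ (-p) * ∑' k : ℕ, ((k : ℝ) + 1) ^ (-(p / d)) := by
        rw [← Finset.mul_sum]
        gcongr

lemma frobNorm_le_of_forall_sum_sq_le {ι : Type*} [Fintype ι] (A : Matrix ι ι ℝ) {B : ℝ}
    (hA : ∀ i, ∑ j, A i j ^ 2 ≤ B) :
    frobNorm A ≤ Real.sqrt B * Real.sqrt (Fintype.card ι) := by
  have hsum : ∑ i, ∑ j, A i j ^ 2 ≤ Fintype.card ι * B := by
    simpa using Finset.sum_le_sum fun i (_ : i ∈ Finset.univ) => hA i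
  rw [← Real.sqrt_mul' _ (Nat.cast_nonneg _), mul_comm]
  exact Real.sqrt_le_sqrt hsum

theorem stmt14_general (d : ℕ) (Cmin Cmax C ζ : ℝ)
    (hd : 1 ≤ d) (hCmin : 0 < Cmin) (hC : 0 < C) (hζ : 0 ≤ ζ) :
    ∃ A : ℝ, 0 < A ∧
      ∀ (n : ℕ) (D : Finset (Pt d)), QuasiUniform d n Cmin Cmax D →
        ∀ Ψ : Matrix D D ℝ, Ψ.IsSymm →
          (∀ s t : D,
            |Ψ s t| ≤ C * (1 + (Nof d n : ℝ) * ‖(s : Pt d) - (t : Pt d)‖) ^ (-((d : ℝ) + ζ)) *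
              (1 + if ζ = 0 then
                    Real.log (1 + (Nof d n : ℝ) * ‖(s : Pt d) - (t : Pt d)‖) else 0)) →
          frobNorm Ψ ≤ A * Real.sqrt n := by
  set p : ℝ := 2 * ((d : ℝ) + ζ) - 2⁻¹
  have hdp : (d : ℝ) < p := by
    have : (1 : ℝ) ≤ d := by exact_mod_cast hd
    show (d : ℝ) < 2 * ((d : ℝ) + ζ) - 2⁻¹
    linarith
  set B : ℝ := 1 + (Cmin / 2) ^ (-p) * ∑' k : ℕ, ((k : ℝ) + 1) ^ (-(p / d))
  have hB : 0 < B := by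
    have : 0 ≤ ∑' k : ℕ, ((k : ℝ) + 1) ^ (-(p / d)) := tsum_nonneg fun k => by positivity
    positivity
  refine ⟨5 * C * Real.sqrt B, by positivity, fun n D hD Ψ _ hΨ => ?_⟩
  have hrow (s : D) : ∑ t, Ψ s t ^ 2 ≤ (5 * C) ^ 2 * B := calc
    ∑ t, Ψ s t ^ 2 ≤ ∑ t : D, 25 * C ^ 2 * (1 + Nof d n * ‖(s : Pt d) - t‖) ^ (-p) :=
      Finset.sum_le_sum fun t _ =>
        sq_le_of_abs_le_rpow_neg_mul_one_add_log _ (by positivity) (hΨ s t)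
    _ = 25 * C ^ 2 * ∑ t ∈ D, (1 + Nof d n * ‖(s : Pt d) - t‖) ^ (-p) := by
      rw [← Finset.mul_sum,
        Finset.sum_coe_sort D fun t => (1 + Nof d n * ‖(s : Pt d) - t‖) ^ (-p)]
    _ ≤ (5 * C) ^ 2 * B := by
      rw [show (5 * C) ^ 2 = 25 * C ^ 2 by ring]
      gcongr
      exact hD.sum_one_add_Nof_mul_norm_rpow_neg_le hCmin hd hdp s.2
  calc frobNorm Ψ ≤ Real.sqrt ((5 * C) ^ 2 * B) * Real.sqrt (Fintype.card D) :=
      frobNorm_le_of_forall_sum_sq_le Ψ hrow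
    _ = 5 * C * Real.sqrt B * Real.sqrt n := by
      rw [Real.sqrt_mul (by positivity), Real.sqrt_sq (by positivity), Fintype.card_coe, hD.1]

/-- **Lemma C.3.**  A real symmetric matrix `Ψ` on a quasi-uniform set `Dₙ` whose entries obey
the log-augmented polynomial decay
`|Ψ_{s,t}| ≤ C (1 + N‖s-t‖)^{-(d+ζ)} (1 + [ζ = 0] log(1 + N‖s-t‖))` satisfies
`‖Ψ‖_F ≤ A √n` for a bounded constant `A` depending only on `C, d, ζ` and the quasi-uniformity
constants. -/
theorem stmt14 (d : ℕ) (Cmin Cmax C ζ : ℝ)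
    (hd : 1 ≤ d) (hCmin : 0 < Cmin) (hCC : Cmin ≤ Cmax) (hC : 0 < C) (hζ : 0 ≤ ζ) :
    ∃ A : ℝ, 0 < A ∧
      ∀ (n : ℕ) (D : Finset (Pt d)), QuasiUniform d n Cmin Cmax D →
        ∀ Ψ : Matrix D D ℝ, Ψ.IsSymm →
          (∀ s t : D,
            |Ψ s t| ≤ C * (1 + (Nof d n : ℝ) * ‖(s : Pt d) - (t : Pt d)‖) ^ (-((d : ℝ) + ζ)) *
              (1 + if ζ = 0 then
                    Real.log (1 + (Nof d n : ℝ) * ‖(s : Pt d) - (t : Pt d)‖) else 0)) →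
          frobNorm Ψ ≤ A * Real.sqrt n :=
  stmt14_general d Cmin Cmax C ζ hd hCmin hC hζ
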